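/- For the bidirected path P_n (each edge of the undirected path replaced by arcs in both directions), n ≥ 2, the failed zero forcing number is F(P_n) = ⌈(n−2)/2⌉. -/

import Mathlib

/-- The set of out-neighbors of `v` in the digraph with arc relation `A`. -/
def Nout {V : Type} (A : V → V → Prop) (v : V) : Set V := {w | A v w}

/-- The set of in-neighbors of `v`. -/
def Nin {V : Type} (A : V → V → Prop) (v : V) : Set V := {w | A w v}

/-- One application of the color change rule to the set `S` of filled vertices. -/
def Bstep {V : Type} (A : V → V → Prop) (S : Set V) : Set V :=
  S ∪ {w | ∃ v ∈ S, Nout A v \ S = {w}}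

/-- `S` is a zero forcing set: iterating the color change rule fills all vertices. -/
def IsZFS {V : Type} (A : V → V → Prop) (S : Set V) : Prop :=
  ∃ t, (Bstep A)^[t] S = Set.univ

/-- The failed zero forcing number: the maximum cardinality of a failed zero forcing set. -/
noncomputable def Fnum {V : Type} (A : V → V → Prop) : ℕ :=
  sSup {k | ∃ S : Set V, ¬ IsZFS A S ∧ S.ncard = k}

/-- The zero forcing number: the minimum cardinality of a zero forcing set. -/
noncomputable def Znum {V : Type} (A : V → V → Prop) : ℕ :=
  sInf {k | ∃ S : Set V, IsZFS A S ∧ S.ncard = k}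

/-- `W` is a critical set: `W` is nonempty and no vertex outside `W` has exactly one
out-neighbor in `W`. -/
def IsCritical {V : Type} (A : V → V → Prop) (W : Set V) : Prop :=
  W.Nonempty ∧ ∀ v ∈ Wᶜ, (Nout A v ∩ W).ncard ≠ 1

/-- `D` is a directed cycle: either a single vertex with no arcs, or the vertices can be
cyclically labeled so that the arcs are exactly the consecutive ones. -/
def IsDirectedCycle {V : Type} [Fintype V] (A : V → V → Prop) : Prop :=
  (Fintype.card V = 1 ∧ ∀ u v : V, ¬ A u v) ∨
  (2 ≤ Fintype.card V ∧ ∃ e : ZMod (Fintype.card V) ≃ V,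
      ∀ i j : ZMod (Fintype.card V), A (e i) (e j) ↔ j = i + 1)

/-!
In a set that the colour change rule cannot enlarge, two consecutive filled vertices of the
bidirected path force their outer neighbours, and so fill the whole path; an endpoint has a
single neighbour, so it forces it. Hence a stalled proper subset consists of pairwise
non-consecutive interior vertices and has at most `⌈(n - 2) / 2⌉` elements. Every failed set
lies in such a stalled set (the limit of the forcing process), and the odd interior vertices
form one of exactly this size.
-/

section ColorChange

variable {V : Type} {A : V → V → Prop}

lemma subset_bstep (S : Set V) : S ⊆ Bstep A S :=
  Set.subset_union_left

lemma bstep_eq_self_iff {T : Set V} :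
    Bstep A T = T ↔ ∀ v ∈ T, ∀ w, Nout A v \ T ≠ {w} := by
  constructor
  · intro hT v hv w hw
    have hwT : w ∈ Bstep A T := Or.inr ⟨v, hv, hw⟩
    exact (hw.symm ▸ Set.mem_singleton w : w ∈ Nout A v \ T).2 (hT ▸ hwT)
  · intro hT
    exact Set.union_eq_left.2 fun w ⟨v, hv, hw⟩ => (hT v hv w hw).elim

lemma mem_of_bstep_eq_self {T : Set V} (hT : Bstep A T = T) {v w : V} (hv : v ∈ T)
    (hvw : A v w) (hothers : ∀ u, A v u → u ≠ w → u ∈ T) : w ∈ T := by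
  by_contra hw
  refine bstep_eq_self_iff.1 hT v hv w (Set.eq_singleton_iff_unique_mem.2 ⟨⟨hvw, hw⟩, ?_⟩)
  rintro u ⟨hvu, huT⟩
  by_contra hne
  exact huT (hothers u hvu hne)

lemma not_isZFS_of_bstep_eq_self {T : Set V} (hT : Bstep A T = T) (hne : T ≠ Set.univ) :
    ¬ IsZFS A T := by
  rintro ⟨t, ht⟩
  exact hne (Function.iterate_fixed hT t ▸ ht)

lemma exists_bstep_eq_self_of_not_isZFS [Finite V] {S : Set V} (hS : ¬ IsZFS A S) :
    ∃ T, S ⊆ T ∧ Bstep A T = T ∧ T ≠ Set.univ := by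
  have hmono : Monotone fun t => (Bstep A)^[t] S := monotone_nat_of_le_succ fun t => by
    rw [Function.iterate_succ_apply']
    exact subset_bstep _
  obtain ⟨t, ht⟩ := WellFoundedGT.monotone_chain_condition ⟨_, hmono⟩
  refine ⟨(Bstep A)^[t] S, hmono (Nat.zero_le t), ?_, fun h => hS ⟨t, h⟩⟩
  rw [← Function.iterate_succ_apply' (Bstep A)]
  exact (ht (t + 1) t.le_succ).symm

end ColorChange

lemma Nat.forall_of_consecutive_mem {s : Set ℕ} {N a : ℕ}
    (hsucc : ∀ m, m ∈ s → m + 1 ∈ s → m + 2 ∈ s)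
    (hpred : ∀ m, m + 1 < N → m + 1 ∈ s → m + 2 ∈ s → m ∈ s)
    (haN : a < N) (ha : a ∈ s) (ha' : a + 1 ∈ s) (m : ℕ) : m ∈ s := by
  have hup : ∀ k, a + k ∈ s ∧ a + k + 1 ∈ s := by
    intro k
    induction k with
    | zero => exact ⟨ha, ha'⟩
    | succ k ih => exact ⟨ih.2, hsucc _ ih.1 ih.2⟩
  have hdown : ∀ k ≤ a, a - k ∈ s ∧ a - k + 1 ∈ s := by
    intro k
    induction k with
    | zero => exact fun _ => ⟨ha, ha'⟩
    | succ k ih =>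
      intro hk
      obtain ⟨h₁, h₂⟩ := ih (by omega)
      have e₁ : a - (k + 1) + 1 = a - k := by omega
      have e₂ : a - (k + 1) + 2 = a - k + 1 := by omega
      exact ⟨hpred _ (by omega) (e₁ ▸ h₁) (e₂ ▸ h₂), e₁ ▸ h₁⟩
  rcases le_total a m with h | h
  · simpa [Nat.add_sub_cancel' h] using (hup (m - a)).1
  · simpa [Nat.sub_sub_self h] using (hdown (a - m) (Nat.sub_le a m)).1

lemma Set.ncard_le_of_subset_Ico_of_succ_notMem {X : Set ℕ} {a b : ℕ}
    (hX : X ⊆ Set.Ico a b) (hsep : ∀ x ∈ X, x + 1 ∉ X) : X.ncard ≤ (b - a + 1) / 2 := by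
  have hinj : Set.InjOn (fun x => (x - a) / 2) X := by
    intro x hx y hy hxy
    obtain ⟨hax, -⟩ := hX hx
    obtain ⟨hay, -⟩ := hX hy
    replace hxy : (x - a) / 2 = (y - a) / 2 := hxy
    by_contra hne
    rcases Nat.lt_or_gt_of_ne hne with h | h
    · exact hsep x hx (by rwa [show x + 1 = y by omega])
    · exact hsep y hy (by rwa [show y + 1 = x by omega])
  calc X.ncard = ((fun x => (x - a) / 2) '' X).ncard := hinj.ncard_image.symm
    _ ≤ (Set.Iio ((b - a + 1) / 2)).ncard := by
      refine Set.ncard_le_ncard ?_ (Set.finite_Iio _)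
      rintro _ ⟨x, hx, rfl⟩
      obtain ⟨hax, hxb⟩ := hX hx
      simp only [Set.mem_Iio]
      omega
    _ = (b - a + 1) / 2 := by
      rw [← Finset.coe_range, Set.ncard_coe_finset, Finset.card_range]

def pathArc (n : ℕ) (i j : Fin n) : Prop := (i : ℕ) + 1 = j ∨ (j : ℕ) + 1 = i

section Path

variable {n : ℕ} {T : Set (Fin n)}

lemma eq_univ_of_consecutive_mem (hT : Bstep (pathArc n) T = T) {a : ℕ}
    (haN : a < n) (ha : ∀ h, (⟨a, h⟩ : Fin n) ∈ T) (ha' : ∀ h, (⟨a + 1, h⟩ : Fin n) ∈ T) :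
    T = Set.univ := by
  -- Indices `m ≥ n` lie in `s` vacuously: the last vertex, whose only neighbour is `n - 2`,
  -- behaves as if it had a filled neighbour `n`.
  set s : Set ℕ := {m | ∀ h : m < n, (⟨m, h⟩ : Fin n) ∈ T}
  have hs : ∀ m, m ∈ s := by
    refine Nat.forall_of_consecutive_mem (N := n) (a := a) ?_ ?_ haN ha ha'
    · intro m hm hm' h
      refine mem_of_bstep_eq_self hT (hm' (by omega)) (Or.inl rfl) fun ⟨u, hun⟩ hu hne => ?_
      rcases hu with hu | hu
      · exact absurd (Fin.ext hu.symm) hne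
      · obtain rfl : u = m := by simp only at hu; omega
        exact hm hun
    · intro m hmN hm' hm'' h
      refine mem_of_bstep_eq_self hT (hm' hmN) (Or.inr rfl) fun ⟨u, hun⟩ hu hne => ?_
      rcases hu with hu | hu
      · obtain rfl : u = m + 2 := by simp only at hu; omega
        exact hm'' hun
      · exact absurd (Fin.ext (by simp only at hu ⊢; omega)) hne
  exact Set.eq_univ_of_forall fun v => hs v v.isLt

lemma val_mem_Ioo_of_bstep_eq_self (hT : Bstep (pathArc n) T = T) (hne : T ≠ Set.univ)
    {v : Fin n} (hv : v ∈ T) : 0 < (v : ℕ) ∧ (v : ℕ) + 1 < n := by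
  constructor
  · by_contra hv0
    rw [show v = ⟨0, v.pos⟩ from Fin.ext (Nat.eq_zero_of_not_pos hv0)] at hv
    refine hne (eq_univ_of_consecutive_mem hT v.pos (fun _ => hv) fun h => ?_)
    refine mem_of_bstep_eq_self hT hv (Or.inl rfl) fun u hu hu1 => ?_
    rcases hu with hu | hu
    · exact absurd (Fin.ext hu.symm) hu1
    · exact absurd hu (by simp)
  · by_contra hvn
    exact hne (eq_univ_of_consecutive_mem hT v.isLt (fun _ => hv) fun h => absurd h hvn)

lemma succ_notMem_of_bstep_eq_self (hT : Bstep (pathArc n) T = T) (hne : T ≠ Set.univ)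
    {v w : Fin n} (hv : v ∈ T) (hw : w ∈ T) : (v : ℕ) + 1 ≠ w := by
  intro hvw
  refine hne (eq_univ_of_consecutive_mem hT v.isLt (fun _ => hv) fun h => ?_)
  exact (Fin.ext hvw.symm : w = ⟨v + 1, h⟩) ▸ hw

lemma ncard_le_of_bstep_eq_self (hT : Bstep (pathArc n) T = T) (hne : T ≠ Set.univ) :
    T.ncard ≤ (n - 2 + 1) / 2 := by
  have hIco : Fin.val '' T ⊆ Set.Ico 1 (n - 1) := by
    rintro _ ⟨v, hv, rfl⟩
    have := val_mem_Ioo_of_bstep_eq_self hT hne hv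
    exact ⟨this.1, by omega⟩
  have hsep : ∀ x ∈ Fin.val '' T, x + 1 ∉ Fin.val '' T := by
    rintro _ ⟨v, hv, rfl⟩ ⟨w, hw, hvw⟩
    exact succ_notMem_of_bstep_eq_self hT hne hv hw hvw.symm
  have := Set.ncard_le_of_subset_Ico_of_succ_notMem hIco hsep
  rw [Set.ncard_image_of_injective T Fin.val_injective] at this
  omega

lemma ncard_le_of_not_isZFS {S : Set (Fin n)} (hS : ¬ IsZFS (pathArc n) S) :
    S.ncard ≤ (n - 2 + 1) / 2 := by
  obtain ⟨T, hST, hT, hne⟩ := exists_bstep_eq_self_of_not_isZFS hS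
  exact (Set.ncard_le_ncard hST).trans (ncard_le_of_bstep_eq_self hT hne)

end Path

def oddVertices (n : ℕ) : Set (Fin n) :=
  Set.range fun k : Fin ((n - 2 + 1) / 2) => ⟨2 * k + 1, by omega⟩

lemma mk_notMem_oddVertices {n m : ℕ} (h : m < n) (hm : m % 2 = 0) :
    (⟨m, h⟩ : Fin n) ∉ oddVertices n := by
  rintro ⟨k, hk⟩
  have := congrArg Fin.val hk
  simp only at this
  omega

lemma ncard_oddVertices (n : ℕ) : (oddVertices n).ncard = (n - 2 + 1) / 2 := by
  rw [oddVertices, Set.ncard_range_of_injective, Nat.card_eq_fintype_card, Fintype.card_fin]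
  intro k l hkl
  have := congrArg Fin.val hkl
  simp only at this
  exact Fin.ext (by omega)

lemma bstep_oddVertices (n : ℕ) : Bstep (pathArc n) (oddVertices n) = oddVertices n := by
  refine bstep_eq_self_iff.2 ?_
  rintro _ ⟨k, rfl⟩ w hw
  have hk := k.isLt
  beta_reduce at hw
  set v : Fin n := ⟨2 * k + 1, by omega⟩
  have hprev : (⟨2 * k, by omega⟩ : Fin n) ∈ Nout (pathArc n) v \ oddVertices n :=
    ⟨Or.inr rfl, mk_notMem_oddVertices _ (by omega)⟩
  have hnext : (⟨2 * k + 2, by omega⟩ : Fin n) ∈ Nout (pathArc n) v \ oddVertices n :=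
    ⟨Or.inl rfl, mk_notMem_oddVertices _ (by omega)⟩
  rw [hw] at hprev hnext
  have := congrArg Fin.val (hprev.trans hnext.symm)
  simp only at this
  omega

lemma not_isZFS_oddVertices {n : ℕ} (hn : 0 < n) : ¬ IsZFS (pathArc n) (oddVertices n) :=
  not_isZFS_of_bstep_eq_self (bstep_oddVertices n) fun h =>
    mk_notMem_oddVertices hn rfl (h ▸ Set.mem_univ _)

theorem stmt_17 (n : ℕ) (hn : 2 ≤ n) :
    Fnum (fun i j : Fin n => (i : ℕ) + 1 = j ∨ (j : ℕ) + 1 = i) =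
      (n - 2 + 1) / 2 := by
  have hmax : IsGreatest {k | ∃ S : Set (Fin n), ¬ IsZFS (pathArc n) S ∧ S.ncard = k}
      ((n - 2 + 1) / 2) := by
    refine ⟨⟨oddVertices n, not_isZFS_oddVertices (by omega), ncard_oddVertices n⟩, ?_⟩
    rintro _ ⟨S, hS, rfl⟩
    exact ncard_le_of_not_isZFS hS
  exact hmax.csSup_eq
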